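/- Let f₁(t) = (π²−π−4)t⁶ − 2π(5−π)t⁵ − 3π(5−π)t⁴ − 4(5π−π²−2)t³ − 3π(5−π)t² − 2π(5−π)t + (π²−π−4). Then there exists λ₀ > 1 such that f₁(t) < 0 for t ∈ [1, λ₀) and f₁(t) > 0 for t ∈ (λ₀, +∞). -/

import Mathlib

/-! Coarse bounds on π fix the signs of the coefficients A = π² - π - 4 ≈ 2.73 and
B = π(5 - π) ≈ 5.84 (note 5π - π² - 2 = B - 2). On [1, 5], trading t⁶ for 5t⁵ and t⁵ for 5t⁴
leaves only negative terms, so f₁ < 0 there; on [5, ∞) the same trade, carried down to the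
constant term, shows f₁' > 0. As f₁(6) > 0, the intermediate value theorem gives a root
λ₀ ∈ (5, 6), and strict monotonicity on [5, ∞) makes it the only sign change. -/

open Real in
noncomputable def f₁ (t : ℝ) : ℝ :=
  (π ^ 2 - π - 4) * t ^ 6 - 2 * π * (5 - π) * t ^ 5 - 3 * π * (5 - π) * t ^ 4
    - 4 * (5 * π - π ^ 2 - 2) * t ^ 3 - 3 * π * (5 - π) * t ^ 2 - 2 * π * (5 - π) * t
    + (π ^ 2 - π - 4)

open Real Set

theorem exists_sign_change_of_strictMonoOn {f : ℝ → ℝ} {a b c : ℝ} (hab : a ≤ b) (hbc : b ≤ c)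
    (hf : ContinuousOn f (Icc b c)) (hneg : ∀ t ∈ Icc a b, f t < 0) (hpos : 0 < f c)
    (hmono : StrictMonoOn f (Ici b)) :
    ∃ x₀ ∈ Ioo b c, (∀ t ∈ Ico a x₀, f t < 0) ∧ ∀ t ∈ Ioi x₀, 0 < f t := by
  have hb : f b < 0 := hneg b ⟨hab, le_rfl⟩
  obtain ⟨x₀, ⟨hbx₀, hx₀c⟩, hroot⟩ := intermediate_value_Icc hbc hf ⟨hb.le, hpos.le⟩
  refine ⟨x₀, ⟨lt_of_le_of_ne hbx₀ ?_, lt_of_le_of_ne hx₀c ?_⟩, fun t ht ↦ ?_, fun t ht ↦ ?_⟩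
  · rintro rfl; exact hb.ne hroot
  · rintro rfl; exact hpos.ne' hroot
  · rcases le_or_gt t b with htb | hbt
    · exact hneg t ⟨ht.1, htb⟩
    · exact hroot ▸ hmono hbt.le hbx₀ ht.2
  · exact hroot ▸ hmono hbx₀ (hbx₀.trans (le_of_lt ht)) ht

theorem pi_sq_sub_pi_sub_four_mem_Ioo : π ^ 2 - π - 4 ∈ Ioo (2.72 : ℝ) 2.73 := by
  constructor <;> nlinarith [pi_gt_d6, pi_lt_d6]

theorem pi_mul_five_sub_pi_mem_Ioo : π * (5 - π) ∈ Ioo (5.83 : ℝ) 5.85 := by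
  constructor <;> nlinarith [pi_gt_d6, pi_lt_d6]

theorem continuous_f₁ : Continuous f₁ := by
  unfold f₁; fun_prop

theorem deriv_f₁ (t : ℝ) : deriv f₁ t = 6 * (π ^ 2 - π - 4) * t ^ 5 - 10 * π * (5 - π) * t ^ 4
    - 12 * π * (5 - π) * t ^ 3 - 12 * (5 * π - π ^ 2 - 2) * t ^ 2 - 6 * π * (5 - π) * t
    - 2 * π * (5 - π) := by
  unfold f₁
  simp (disch := fun_prop)
  ring

theorem f₁_neg_of_mem_Icc {t : ℝ} (ht : t ∈ Icc (1 : ℝ) 5) : f₁ t < 0 := by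
  obtain ⟨hA, hA'⟩ := pi_sq_sub_pi_sub_four_mem_Ioo
  obtain ⟨hB, hB'⟩ := pi_mul_five_sub_pi_mem_Ioo
  have ht0 : 0 ≤ t := by linarith [ht.1]
  have hs : 0 ≤ 5 - t := by linarith [ht.2]
  -- Identically f₁ t = -(h₁ + h₂ + h₃ + 4 h₄ + 3 h₅ + h₆), using 5π - π² - 2 = π(5 - π) - 2.
  have h₁ : 0 ≤ (π ^ 2 - π - 4) * ((5 - t) * t ^ 5) := by positivity
  have h₂ : 0 ≤ (5 * (π ^ 2 - π - 4) - 2 * (π * (5 - π))) * ((5 - t) * t ^ 4) :=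
    mul_nonneg (by linarith) (by positivity)
  have h₃ : 0 ≤ (13 * (π * (5 - π)) - 25 * (π ^ 2 - π - 4)) * t ^ 4 :=
    mul_nonneg (by linarith) (by positivity)
  have h₄ : 0 ≤ (π * (5 - π) - 2) * t ^ 3 := mul_nonneg (by linarith) (by positivity)
  have h₅ : 0 ≤ π * (5 - π) * t ^ 2 := mul_nonneg (by linarith) (by positivity)
  have h₆ : 0 < 2 * (π * (5 - π)) * t - (π ^ 2 - π - 4) := by nlinarith [ht.1]
  unfold f₁
  linarith

theorem f₁_six_pos : 0 < f₁ 6 := by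
  obtain ⟨hA, -⟩ := pi_sq_sub_pi_sub_four_mem_Ioo
  obtain ⟨-, hB'⟩ := pi_mul_five_sub_pi_mem_Ioo
  unfold f₁
  linarith

theorem deriv_f₁_pos {t : ℝ} (ht : 5 ≤ t) : 0 < deriv f₁ t := by
  obtain ⟨hA, -⟩ := pi_sq_sub_pi_sub_four_mem_Ioo
  obtain ⟨hB, hB'⟩ := pi_mul_five_sub_pi_mem_Ioo
  have hs : 0 ≤ t - 5 := by linarith
  -- Identically f₁' t = h₅ + h₄ + h₃ + h₂ + h₁ + h₀, using 5π - π² - 2 = π(5 - π) - 2.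
  have h₅ : 0 ≤ 6 * (π ^ 2 - π - 4) * ((t - 5) * t ^ 4) := by positivity
  have h₄ : 0 ≤ (30 * (π ^ 2 - π - 4) - 10 * (π * (5 - π))) * ((t - 5) * t ^ 3) :=
    mul_nonneg (by linarith) (by positivity)
  have h₃ : 0 ≤ (150 * (π ^ 2 - π - 4) - 62 * (π * (5 - π))) * ((t - 5) * t ^ 2) :=
    mul_nonneg (by linarith) (by positivity)
  have h₂ : 0 ≤ (750 * (π ^ 2 - π - 4) - 322 * (π * (5 - π)) + 24) * ((t - 5) * t) :=
    mul_nonneg (by linarith) (by positivity)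
  have h₁ : 0 ≤ (3750 * (π ^ 2 - π - 4) - 1616 * (π * (5 - π)) + 120) * (t - 5) :=
    mul_nonneg (by linarith) hs
  have h₀ : 0 < 18750 * (π ^ 2 - π - 4) - 8082 * (π * (5 - π)) + 600 := by linarith
  rw [deriv_f₁]
  linarith

theorem strictMonoOn_f₁ : StrictMonoOn f₁ (Ici 5) :=
  strictMonoOn_of_deriv_pos (convex_Ici 5) continuous_f₁.continuousOn fun t ht ↦
    deriv_f₁_pos (le_of_lt (by simpa using ht))

theorem stmt_10 :
    ∃ lam₀ > (1 : ℝ), (∀ t ∈ Set.Ico (1 : ℝ) lam₀, f₁ t < 0) ∧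
      (∀ t ∈ Set.Ioi lam₀, 0 < f₁ t) := by
  obtain ⟨lam₀, hlam₀, hneg, hpos⟩ := exists_sign_change_of_strictMonoOn (by norm_num)
    (by norm_num) continuous_f₁.continuousOn (fun _ ↦ f₁_neg_of_mem_Icc) f₁_six_pos
    strictMonoOn_f₁
  exact ⟨lam₀, by linarith [hlam₀.1], hneg, hpos⟩
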